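/- Let (V,X,d) be a continuity space that is symmetric, i.e. d(x,y) = d(y,x) for all x, y ∈ X. Then the topology generated by (V,X,d) is completely regular: for every set O open in the generated topology and every x₀ ∈ O there exists a function f : X → [0,1], continuous with respect to the generated topology, such that f(x₀) = 1 and f(y) = 0 for every y outside O; in particular every point and every closed set not containing it are separated by a continuous [0,1]-valued function. -/

import Mathlib

/-- `y` is well above `x` (written `y ≻ x`): for every `S` with `⨅ S ≤ x`
there is `s ∈ S` with `s ≤ y`. -/
def WellAbove {V : Type*} [CompleteLattice V] (y x : V) : Prop :=
  ∀ S : Set V, sInf S ≤ x → ∃ s ∈ S, s ≤ y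

theorem WellAbove.mono {V : Type*} [CompleteLattice V] {a b x : V}
    (h : WellAbove a x) (hab : a ≤ b) : WellAbove b x := by
  intro S hS
  obtain ⟨s, hs, hsa⟩ := h S hS
  exact ⟨s, hs, hsa.trans hab⟩

/-- A complete lattice `V` together with an addition `add` is a value quantale if it is
completely distributive (expressed via Raney's characterization `y = ⨅ {a | a ≻ y}`),
the set `{a | a ≻ ⊥}` is a filter (nonempty, upward closed, closed under binary meets),
and `add` is associative, commutative, has `⊥` as neutral element and distributes over
arbitrary infima. -/
structure IsValueQuantale (V : Type*) [CompleteLattice V] (add : V → V → V) : Prop where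
  raney : ∀ y : V, y = sInf {a | WellAbove a y}
  wellAbove_bot_nonempty : ∃ a : V, WellAbove a ⊥
  wellAbove_bot_upward : ∀ a b : V, WellAbove a ⊥ → a ≤ b → WellAbove b ⊥
  wellAbove_bot_inf : ∀ a b : V, WellAbove a ⊥ → WellAbove b ⊥ → WellAbove (a ⊓ b) ⊥
  add_assoc : ∀ a b c : V, add (add a b) c = add a (add b c)
  add_comm : ∀ a b : V, add a b = add b a
  add_bot : ∀ a : V, add a ⊥ = a
  add_sInf : ∀ (a : V) (S : Set V), add a (sInf S) = ⨅ s ∈ S, add a s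

/-- A value quantale, bundled as a class. -/
class ValueQuantale (V : Type*) extends CompleteLattice V, Add V where
  isVQ : IsValueQuantale V (· + ·)

/-- `d : X → X → V` is a `V`-space distance (w.r.t. the addition `add`). -/
structure IsVSpaceOn {V : Type*} [CompleteLattice V] (add : V → V → V)
    {X : Type*} (d : X → X → V) : Prop where
  refl : ∀ x, d x x = ⊥
  triangle : ∀ x y z, d x z ≤ add (d x y) (d y z)

/-- The open ball of radius `ε` about `x`: all `y` with `d x y ≺ ε`. -/
def ball {V X : Type*} [CompleteLattice V] (d : X → X → V) (ε : V) (x : X) : Set X :=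
  {y | WellAbove ε (d x y)}

/-- `U` is open for the topology generated by a continuity space. -/
def GenOpen {V X : Type*} [CompleteLattice V] (d : X → X → V) (U : Set X) : Prop :=
  ∀ x ∈ U, ∃ ε : V, WellAbove ε ⊥ ∧ ball d ε x ⊆ U

/-- The topology generated by a continuity space `(V, X, d)`. -/
def genTop {V X : Type*} [ValueQuantale V] (d : X → X → V) : TopologicalSpace X where
  IsOpen := GenOpen d
  isOpen_univ := fun _x _ => by
    obtain ⟨ε, hε⟩ := (ValueQuantale.isVQ (V := V)).wellAbove_bot_nonempty
    exact ⟨ε, hε, Set.subset_univ _⟩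
  isOpen_inter := fun U₁ U₂ h₁ h₂ x hx => by
    obtain ⟨ε₁, hε₁, hb₁⟩ := h₁ x hx.1
    obtain ⟨ε₂, hε₂, hb₂⟩ := h₂ x hx.2
    exact ⟨ε₁ ⊓ ε₂, (ValueQuantale.isVQ (V := V)).wellAbove_bot_inf _ _ hε₁ hε₂,
      fun y hy => ⟨hb₁ (WellAbove.mono hy inf_le_left), hb₂ (WellAbove.mono hy inf_le_right)⟩⟩
  isOpen_sUnion := fun S hS x hx => by
    obtain ⟨U, hU, hxU⟩ := hx
    obtain ⟨ε, hε, hb⟩ := hS U hU x hxU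
    exact ⟨ε, hε, hb.trans (Set.subset_sUnion_of_mem hU)⟩

/-- `Ω S`: the downward-closed families of finite subsets of `S`,
ordered by reverse inclusion. -/
abbrev Omega (S : Type*) := (LowerSet (Finset S))ᵒᵈ

/-- The underlying family of finite subsets of an element of `Ω S`. -/
def Omega.carrier {S : Type*} (A : Omega S) : Set (Finset S) :=
  ((OrderDual.ofDual A : LowerSet (Finset S)) : Set (Finset S))

/-- Construct an element of `Ω S` from a downward-closed family of finite subsets. -/
def Omega.mk {S : Type*} (A : Set (Finset S)) (h : IsLowerSet A) : Omega S :=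
  OrderDual.toDual ⟨A, h⟩

/-- Addition on `Ω S`: intersection of the families. -/
def omegaAdd {S : Type*} (A B : Omega S) : Omega S :=
  Omega.mk (Omega.carrier A ∩ Omega.carrier B)
    ((OrderDual.ofDual A : LowerSet (Finset S)).lower.inter
      (OrderDual.ofDual B : LowerSet (Finset S)).lower)

/-! A symmetric `V`-space carries a uniform structure whose entourages are the sets
`{(x, y) | d x y ≤ ε}` with `ε ≻ ⊥`: the triangle inequality composes them, and halving radii
(`δ + δ ≤ ε`) comes from `⊥ = ⨅ {a | a ≻ ⊥}` together with `+` preserving infima. Interpolating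
`⊥ ≺ γ ≺ ε` shows that this uniformity induces the generated topology, and uniform spaces are
completely regular. -/

open Set Topology

theorem WellAbove.le {V : Type*} [CompleteLattice V] {a b : V} (h : WellAbove a b) : b ≤ a := by
  obtain ⟨s, rfl, hs⟩ := h {b} (by simp)
  exact hs

theorem WellAbove.anti {V : Type*} [CompleteLattice V] {a b c : V} (h : WellAbove a b)
    (hcb : c ≤ b) : WellAbove a c :=
  fun S hS => h S (hS.trans hcb)

namespace ValueQuantale

variable {V : Type*} [ValueQuantale V]

theorem add_le_add_left (c : V) {a b : V} (hab : a ≤ b) : c + a ≤ c + b := by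
  have h := isVQ.add_sInf c {a, b}
  rw [sInf_pair, inf_eq_left.mpr hab] at h
  rw [h]
  exact iInf₂_le b (by simp)

theorem add_le_add {a b c e : V} (hab : a ≤ b) (hce : c ≤ e) : a + c ≤ b + e :=
  calc a + c ≤ a + e := add_le_add_left a hce
    _ = e + a := isVQ.add_comm a e
    _ ≤ e + b := add_le_add_left e hab
    _ = b + e := isVQ.add_comm e b

theorem sInf_add_sInf (S T : Set V) : sInf S + sInf T = sInf (image2 (· + ·) S T) := by
  rw [sInf_image2, isVQ.add_comm, isVQ.add_sInf]
  refine iInf_congr fun s => iInf_congr fun _ => ?_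
  rw [isVQ.add_comm, isVQ.add_sInf]

theorem exists_add_self_le {ε : V} (hε : WellAbove ε ⊥) :
    ∃ δ : V, WellAbove δ ⊥ ∧ δ + δ ≤ ε := by
  have hbot : sInf (image2 (· + ·) {a : V | WellAbove a ⊥} {a | WellAbove a ⊥}) ≤ ⊥ := by
    rw [← sInf_add_sInf, ← isVQ.raney, isVQ.add_bot]
  obtain ⟨_, ⟨b, hb, c, hc, rfl⟩, hbc⟩ := hε _ hbot
  exact ⟨b ⊓ c, isVQ.wellAbove_bot_inf b c hb hc, (add_le_add inf_le_left inf_le_right).trans hbc⟩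

theorem exists_wellAbove_bot_wellAbove {ε : V} (hε : WellAbove ε ⊥) :
    ∃ γ : V, WellAbove γ ⊥ ∧ WellAbove ε γ := by
  have hbot : sInf {b : V | ∃ a, WellAbove a ⊥ ∧ WellAbove b a} ≤ ⊥ :=
    calc sInf {b : V | ∃ a, WellAbove a ⊥ ∧ WellAbove b a}
        ≤ sInf {a | WellAbove a ⊥} := le_sInf fun a ha => (isVQ.raney a).symm ▸
          sInf_le_sInf fun b hb => ⟨a, ha, hb⟩
      _ = ⊥ := (isVQ.raney ⊥).symm
  obtain ⟨b, ⟨a, ha, hba⟩, hbε⟩ := hε _ hbot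
  exact ⟨a, ha, hba.mono hbε⟩

end ValueQuantale

section VSpace

variable {V X : Type*} [ValueQuantale V] {d : X → X → V}

theorem genOpen_iff_exists_le {U : Set X} : GenOpen d U ↔
    ∀ x ∈ U, ∃ ε : V, WellAbove ε ⊥ ∧ {y | d x y ≤ ε} ⊆ U := by
  refine forall₂_congr fun x _ => ⟨fun ⟨ε, hε, hball⟩ => ?_, fun ⟨ε, hε, hle⟩ => ?_⟩
  · obtain ⟨γ, hγ, hγε⟩ := ValueQuantale.exists_wellAbove_bot_wellAbove hε
    exact ⟨γ, hγ, fun y hy => hball (hγε.anti hy)⟩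
  · exact ⟨ε, hε, fun y hy => hle (WellAbove.le hy)⟩

def entourageBasis (d : X → X → V) : FilterBasis (X × X) where
  sets := (fun ε => {p | d p.1 p.2 ≤ ε}) '' {ε | WellAbove ε ⊥}
  nonempty :=
    let ⟨_, hε⟩ := (ValueQuantale.isVQ (V := V)).wellAbove_bot_nonempty
    ⟨_, mem_image_of_mem _ hε⟩
  inter_sets := by
    rintro _ _ ⟨ε, hε, rfl⟩ ⟨ε', hε', rfl⟩
    exact ⟨_, mem_image_of_mem _ (ValueQuantale.isVQ.wellAbove_bot_inf ε ε' hε hε'),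
      fun p hp => ⟨le_trans hp inf_le_left, le_trans hp inf_le_right⟩⟩

theorem mem_entourageBasis {r : Set (X × X)} :
    r ∈ entourageBasis d ↔ ∃ ε, WellAbove ε ⊥ ∧ {p | d p.1 p.2 ≤ ε} = r :=
  Iff.rfl

def IsVSpaceOn.uniformCore (hd : IsVSpaceOn (· + · : V → V → V) d)
    (hsym : ∀ x y, d x y = d y x) : UniformSpace.Core X :=
  .mkOfBasis (entourageBasis d)
    (by
      simp only [mem_entourageBasis, forall_exists_index, and_imp]
      rintro _ ε - rfl x
      exact (hd.refl x).le.trans bot_le)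
    (by
      simp only [mem_entourageBasis, forall_exists_index, and_imp]
      rintro _ ε hε rfl
      exact ⟨_, mem_image_of_mem _ hε, fun p hp => by simpa [hsym p.2 p.1] using hp⟩)
    (by
      simp only [mem_entourageBasis, forall_exists_index, and_imp]
      rintro _ ε hε rfl
      obtain ⟨δ, hδ, hδε⟩ := ValueQuantale.exists_add_self_le hε
      refine ⟨_, mem_image_of_mem _ hδ, ?_⟩
      rintro ⟨x, z⟩ ⟨y, hxy, hyz⟩
      exact (hd.triangle x y z).trans ((ValueQuantale.add_le_add hxy hyz).trans hδε))

theorem IsVSpaceOn.genTop_eq_uniformCore (hd : IsVSpaceOn (· + · : V → V → V) d)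
    (hsym : ∀ x y, d x y = d y x) : genTop d = (hd.uniformCore hsym).toTopologicalSpace := by
  refine TopologicalSpace.ext (funext fun U => propext ?_)
  change GenOpen d U ↔ IsOpen[(hd.uniformCore hsym).toTopologicalSpace] U
  let := (hd.uniformCore hsym).toTopologicalSpace
  rw [genOpen_iff_exists_le, isOpen_iff_mem_nhds]
  simp only [UniformSpace.Core.nhds_toTopologicalSpace, IsVSpaceOn.uniformCore,
    UniformSpace.Core.mkOfBasis, ((entourageBasis d).hasBasis.comap _).mem_iff,
    mem_entourageBasis, exists_exists_and_eq_and]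
  rfl

theorem IsVSpaceOn.completelyRegularSpace_genTop (hd : IsVSpaceOn (· + · : V → V → V) d)
    (hsym : ∀ x y, d x y = d y x) : @CompletelyRegularSpace X (genTop d) :=
  letI : UniformSpace X :=
    .ofCoreEq (hd.uniformCore hsym) (genTop d) (hd.genTop_eq_uniformCore hsym)
  inferInstance

end VSpace

/-- a symmetric continuity space generates a completely regular topology:
for every generated-open `O` and `x₀ ∈ O` there is a `[0,1]`-valued function `f`,
continuous for the generated topology, with `f x₀ = 1` and `f = 0` outside `O`. -/
theorem symmetric_completelyRegular {V X : Type*} [ValueQuantale V] (d : X → X → V)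
    (hd : IsVSpaceOn (· + · : V → V → V) d) (hsym : ∀ x y, d x y = d y x) :
    ∀ O : Set X, (genTop d).IsOpen O → ∀ x₀ ∈ O,
      ∃ f : X → ℝ, @Continuous X ℝ (genTop d) _ f ∧
        (∀ x, f x ∈ Set.Icc (0 : ℝ) 1) ∧ f x₀ = 1 ∧ ∀ y ∉ O, f y = 0 := by
  let := genTop d
  have := hd.completelyRegularSpace_genTop hsym
  intro O hO x₀ hx₀
  obtain ⟨g, hg, hgx₀, hgO⟩ := CompletelyRegularSpace.completely_regular_isOpen x₀ O hO hx₀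
  refine ⟨fun x => unitInterval.symm (g x), ?_, fun x => (unitInterval.symm (g x)).2, ?_, ?_⟩
  · exact continuous_subtype_val.comp (unitInterval.continuous_symm.comp hg)
  · simp [hgx₀]
  · intro y hy
    simp [hgO hy]
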